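/- arXiv:math/0510535 — 4 statements merged into one kernel-verified Lean document; each statement's English description precedes it below -/
import Mathlib

section
/- Let G be a finite simple graph and S ⊆ V(G) an independent set. Then the multihomomorphisms φ : V(G∖S) → P(V(K_n))∖{∅} lying in the image of the restriction map from Hom(G, K_n) are exactly those φ with ν(⋃_{u ∈ ν({v})} φ(u)) ≠ ∅ for every v ∈ S, where ν denotes the common-neighbourhood operator in K_n (respectively in G for ν({v})). -/
/-- Let `G` be a finite simple graph, `S` an independent set of vertices and
`φ` a multihomomorphism from `G ∖ S` to `K_n` (encoded as a function on all of `V` whose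
values on `S` are irrelevant).  Then `φ` lies in the image of the restriction map from
`Hom(G, K_n)`, i.e. extends to a multihomomorphism of `G`, iff for every `v ∈ S` the set of
common neighbours in `K_n` of `⋃_{u ∈ ν({v})} φ u` (that is, the complement of this union) is
nonempty. -/
theorem stmt7 {V : Type*} [Fintype V] (G : SimpleGraph V) (S : Set V)
    (hS : ∀ u ∈ S, ∀ v ∈ S, ¬ G.Adj u v) (n : ℕ)
    (φ : V → Set (Fin n))
    (hne : ∀ v, v ∉ S → (φ v).Nonempty)
    (hmh : ∀ u v, u ∉ S → v ∉ S → G.Adj u v → φ u ∩ φ v = ∅) :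
    (∃ ψ : V → Set (Fin n),
        (∀ v, (ψ v).Nonempty) ∧
        (∀ u v, G.Adj u v → ψ u ∩ ψ v = ∅) ∧
        ∀ v, v ∉ S → ψ v = φ v) ↔
      ∀ v ∈ S, ((⋃ u ∈ {u | G.Adj v u}, φ u)ᶜ : Set (Fin n)).Nonempty := by
  classical
  constructor
  · rintro ⟨ψ, hψne, hψd, hψeq⟩ v hv
    obtain ⟨x, hx⟩ := hψne v
    refine ⟨x, ?_⟩
    simp only [Set.mem_compl_iff, Set.mem_iUnion]
    rintro ⟨u, hu, hxu⟩
    have huS : u ∉ S := fun huS => hS v hv u huS hu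
    have : x ∈ ψ v ∩ ψ u := ⟨hx, (hψeq u huS) ▸ hxu⟩
    rw [hψd v u hu] at this
    exact this
  · intro h
    refine ⟨fun v => if v ∈ S then (⋃ u ∈ {u | G.Adj v u}, φ u)ᶜ else φ v, ?_, ?_, ?_⟩
    · intro v
      by_cases hv : v ∈ S
      · simpa [hv] using h v hv
      · simpa [hv] using hne v hv
    · intro u v huv
      by_cases hu : u ∈ S <;> by_cases hv : v ∈ S
      · exact absurd huv (hS u hu v hv)
      · simp only [hu, hv, if_pos, if_neg, if_true, if_false]
        ext x
        simp only [Set.mem_inter_iff, Set.mem_compl_iff, Set.mem_iUnion, Set.mem_empty_iff_false,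
          iff_false, not_and]
        intro hx hc
        exact hx ⟨v, huv, hc⟩
      · simp only [hu, hv, if_pos, if_neg, if_true, if_false]
        ext x
        simp only [Set.mem_inter_iff, Set.mem_compl_iff, Set.mem_iUnion, Set.mem_empty_iff_false,
          iff_false, not_and]
        intro hx hc
        exact hc ⟨u, huv.symm, hx⟩
      · simpa [hu, hv] using hmh u v hu hv huv
    · intro v hv; simp [hv]
end

section
/- Let P be the face poset of a simplicial complex triangulating a compact manifold. For an element s = (pᵒᵖ, q, rᵒᵖ) ∈ Pᵒᵖ × Int P (so q ≤ r in P) and a single vertex x ∈ p ∩ (r ∖ q), the open upper link lk_{x}(s) of s in the direction x consists of exactly the five elements (pᵒᵖ, q∪{x}, rᵒᵖ), ((p∖{x})ᵒᵖ, q∪{x}, rᵒᵖ), ((p∖{x})ᵒᵖ, q, rᵒᵖ), ((p∖{x})ᵒᵖ, q, (r∖{x})ᵒᵖ), (pᵒᵖ, q, (r∖{x})ᵒᵖ), with consecutive elements in this listing (and only these) comparable; hence its order complex is a path (an interval) with endpoints (pᵒᵖ, q∪{x}, rᵒᵖ) and (pᵒᵖ, q, (r∖{x})ᵒᵖ). 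-/
open scoped symmDiff

/-- The componentwise order on triples `(uᵒᵖ, v, wᵒᵖ)` (first and last coordinates
reversed). -/
def TripleLE {V : Type*} (a b : Finset V × Finset V × Finset V) : Prop :=
  b.1 ⊆ a.1 ∧ a.2.1 ⊆ b.2.1 ∧ b.2.2 ⊆ a.2.2

private lemma sd_sub {V : Type*} [DecidableEq V] {u p : Finset V} {x : V}
    (hup : u ⊆ p) (h : u ∆ p ⊆ {x}) : u = p ∨ u = p.erase x := by
  by_cases hx : x ∈ u
  · left
    refine subset_antisymm hup fun y hy => ?_
    by_contra hyu
    have hy' : y ∈ u ∆ p := by simp [Finset.mem_symmDiff, hy, hyu]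
    have := h hy'
    simp at this
    subst this
    exact hyu hx
  · right
    ext y
    simp only [Finset.mem_erase]
    constructor
    · intro hy
      exact ⟨fun hxy => hx (hxy ▸ hy), hup hy⟩
    · rintro ⟨hyx, hyp⟩
      by_contra hyu
      have hy' : y ∈ u ∆ p := by simp [Finset.mem_symmDiff, hyp, hyu]
      have := h hy'
      simp at this
      exact hyx this

private lemma sd_sup {V : Type*} [DecidableEq V] {u q : Finset V} {x : V}
    (hqu : q ⊆ u) (h : u ∆ q ⊆ {x}) : u = q ∨ u = insert x q := by
  rcases sd_sub hqu (by rwa [symmDiff_comm]) with h1 | h1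
  · exact Or.inl h1.symm
  · by_cases hx : x ∈ u
    · right
      rw [h1, Finset.insert_erase hx]
    · left
      rw [h1, Finset.erase_eq_of_notMem hx]

/-- Let `K` be (the set of faces of) a simplicial complex, `s = (pᵒᵖ, q, rᵒᵖ)`
with `p, q, r` faces, `q ⊆ r`, and let `x ∈ p ∩ (r ∖ q)`.  Then the link of `s` in the
direction `x`, i.e. the set of `(uᵒᵖ, v, wᵒᵖ)` with `u ∈ K ∪ {∅}`, `v, w ∈ K` nonempty,
`v ⊆ w`, `(uᵒᵖ, v, wᵒᵖ) > s` and `u △ p, v △ q, w △ r ⊆ {x}`, consists of exactly the five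
elements `(pᵒᵖ, q∪{x}, rᵒᵖ)`, `((p∖{x})ᵒᵖ, q∪{x}, rᵒᵖ)`, `((p∖{x})ᵒᵖ, q, rᵒᵖ)`,
`((p∖{x})ᵒᵖ, q, (r∖{x})ᵒᵖ)`, `(pᵒᵖ, q, (r∖{x})ᵒᵖ)`, and exactly the consecutive pairs in this
listing are comparable; hence its order complex is a path with endpoints
`(pᵒᵖ, q∪{x}, rᵒᵖ)` and `(pᵒᵖ, q, (r∖{x})ᵒᵖ)`. -/
theorem stmt14 {V : Type*} [DecidableEq V] (K : Finset V → Prop)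
    (hK : ∀ s t : Finset V, t ⊆ s → K s → K t)
    (p q r : Finset V) (hp : K p) (hq : K q) (hr : K r)
    (hpne : p ≠ ∅) (hqne : q ≠ ∅) (hqr : q ⊆ r)
    (x : V) (hxp : x ∈ p) (hxr : x ∈ r) (hxq : x ∉ q)
    (e : Fin 5 → Finset V × Finset V × Finset V)
    (he : e = ![(p, insert x q, r), (p.erase x, insert x q, r), (p.erase x, q, r),
      (p.erase x, q, r.erase x), (p, q, r.erase x)]) :
    {t : Finset V × Finset V × Finset V |
        (K t.1 ∨ t.1 = ∅) ∧ K t.2.1 ∧ t.2.1 ≠ ∅ ∧ K t.2.2 ∧ t.2.2 ≠ ∅ ∧ t.2.1 ⊆ t.2.2 ∧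
        TripleLE (p, q, r) t ∧ (p, q, r) ≠ t ∧
        t.1 ∆ p ⊆ {x} ∧ t.2.1 ∆ q ⊆ {x} ∧ t.2.2 ∆ r ⊆ {x}} =
      {e 0, e 1, e 2, e 3, e 4} ∧
    ∀ i j : Fin 5, i < j →
      ((TripleLE (e i) (e j) ∨ TripleLE (e j) (e i)) ↔ (j : ℕ) = (i : ℕ) + 1) := by
  subst he
  have hpp : ¬ p ⊆ p.erase x := fun h => Finset.notMem_erase x p (h hxp)
  have hrr : ¬ r ⊆ r.erase x := fun h => Finset.notMem_erase x r (h hxr)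
  have hip : ¬ insert x q ⊆ q := fun h => hxq (h (Finset.mem_insert_self x q))
  have hKpe : K (p.erase x) := hK p _ (Finset.erase_subset x p) hp
  have hKre : K (r.erase x) := hK r _ (Finset.erase_subset x r) hr
  have hKiq : K (insert x q) := hK r _ (Finset.insert_subset hxr hqr) hr
  have hqre : q ⊆ r.erase x := Finset.subset_erase.mpr ⟨hqr, hxq⟩
  have hrene : r.erase x ≠ ∅ := fun h => hqne (Finset.subset_empty.mp (h ▸ hqre))
  have hiqne : insert x q ≠ ∅ := Finset.insert_ne_empty x q
  have hne1 : q ≠ insert x q := fun h => hxq (h ▸ Finset.mem_insert_self x q)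
  have hne2 : p ≠ p.erase x := fun h => Finset.notMem_erase x p (h ▸ hxp)
  have hne3 : r ≠ r.erase x := fun h => Finset.notMem_erase x r (h ▸ hxr)
  have sdpe : (p.erase x) ∆ p ⊆ {x} := by
    intro y hy
    simp only [Finset.mem_symmDiff, Finset.mem_erase] at hy
    simp only [Finset.mem_singleton]
    tauto
  have sdre : (r.erase x) ∆ r ⊆ {x} := by
    intro y hy
    simp only [Finset.mem_symmDiff, Finset.mem_erase] at hy
    simp only [Finset.mem_singleton]
    tauto
  have sdiq : (insert x q) ∆ q ⊆ {x} := by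
    intro y hy
    simp only [Finset.mem_symmDiff, Finset.mem_insert] at hy
    simp only [Finset.mem_singleton]
    tauto
  have sdself : ∀ s : Finset V, s ∆ s ⊆ {x} := fun s => by
    rw [symmDiff_self]
    exact Finset.empty_subset _
  constructor
  · ext t
    simp only [Set.mem_setOf_eq, Set.mem_insert_iff, Set.mem_singleton_iff,
      Matrix.cons_val_zero, Matrix.cons_val_one, Matrix.head_cons, Matrix.cons_val_two,
      Matrix.tail_cons, Matrix.cons_val_three, Matrix.cons_val_four, Matrix.head_fin_const]
    constructor
    · intro ht
      obtain ⟨u, v, w⟩ := t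
      obtain ⟨hKu, hKv, hvne, hKw, hwne, hvw, ⟨h1, h2, h3⟩, hne, su, sv, sw⟩ := ht
      dsimp only at h1 h2 h3
      rcases sd_sub h1 su with hu | hu <;> rcases sd_sup h2 sv with hv | hv <;>
        rcases sd_sub h3 sw with hw | hw <;>
        first
          | (rw [hu, hv, hw] at hne
             exact absurd rfl hne)
          | (rw [hv, hw] at hvw
             exact absurd (hvw (Finset.mem_insert_self x q)) (Finset.notMem_erase x r))
          | (rw [hu, hv, hw]
             simp)
    · rintro (rfl | rfl | rfl | rfl | rfl)
      · exact ⟨Or.inl hp, hKiq, hiqne, hr, fun h => hqne (Finset.subset_empty.mp (h ▸ hqr)),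
          Finset.insert_subset hxr hqr, ⟨subset_rfl, Finset.subset_insert x q, subset_rfl⟩,
          fun h => hne1 (congrArg (fun t => t.2.1) h), sdself p, sdiq, sdself r⟩
      · exact ⟨Or.inl hKpe, hKiq, hiqne, hr, fun h => hqne (Finset.subset_empty.mp (h ▸ hqr)),
          Finset.insert_subset hxr hqr, ⟨Finset.erase_subset x p, Finset.subset_insert x q, subset_rfl⟩,
          fun h => hne2 (congrArg (fun t => t.1) h), sdpe, sdiq, sdself r⟩
      · exact ⟨Or.inl hKpe, hq, hqne, hr, fun h => hqne (Finset.subset_empty.mp (h ▸ hqr)),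
          hqr, ⟨Finset.erase_subset x p, subset_rfl, subset_rfl⟩,
          fun h => hne2 (congrArg (fun t => t.1) h), sdpe, sdself q, sdself r⟩
      · exact ⟨Or.inl hKpe, hq, hqne, hKre, hrene, hqre,
          ⟨Finset.erase_subset x p, subset_rfl, Finset.erase_subset x r⟩,
          fun h => hne2 (congrArg (fun t => t.1) h), sdpe, sdself q, sdre⟩
      · exact ⟨Or.inl hp, hq, hqne, hKre, hrene, hqre,
          ⟨subset_rfl, subset_rfl, Finset.erase_subset x r⟩,
          fun h => hne3 (congrArg (fun t => t.2.2) h), sdself p, sdself q, sdre⟩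
  · intro i j hij
    fin_cases i <;> fin_cases j <;>
      simp_all [TripleLE, Finset.erase_subset, Finset.subset_insert]
end

section
/- Let P be a finite poset. Then the set of pairs of chains (C, D) in P with max C ≤ min D (C, D nonempty chains) is in order-preserving bijection with the chains of Int P: a chain (p₀, q₀ᵒᵖ) < ⋯ < (p_r, q_rᵒᵖ) in Int P determines chains C = {p₀,…,p_r} and D = {q_r,…,q₀} with max C ≤ min D; conversely, given chains p₀ < ⋯ < p_r and q₀ < ⋯ < q_s in P with p_r ≤ q₀, the set {p_i} × {q_jᵒᵖ} is contained in Int P. -/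
/-- The closed interval poset `Int P`. -/
abbrev IntPoset (P : Type*) [PartialOrder P] :=
  {x : P × Pᵒᵈ // x.1 ≤ OrderDual.ofDual x.2}

/-- Chains of `Int P` correspond to pairs of chains `(C, D)` of `P` with
`max C ≤ min D`: a chain `(p₀, q₀ᵒᵖ) < ⋯ < (p_r, q_rᵒᵖ)` in `Int P` determines chains
`p₀ ≤ ⋯ ≤ p_r` and `q_r ≤ ⋯ ≤ q₀` with `p_i ≤ q_j` for all `i, j`; conversely, for chains
`p₀ < ⋯ < p_r` and `q₀ < ⋯ < q_s` in `P` with `p_r ≤ q₀`, every pair `(p_i, q_jᵒᵖ)` lies in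
`Int P`. -/
theorem stmt15 {P : Type*} [PartialOrder P] [Finite P] :
    (∀ (r : ℕ) (c : Fin (r + 1) → IntPoset P), StrictMono c →
        Monotone (fun i => (c i).1.1) ∧
        Antitone (fun i => OrderDual.ofDual (c i).1.2) ∧
        ∀ i j, (c i).1.1 ≤ OrderDual.ofDual (c j).1.2) ∧
      ∀ (r s : ℕ) (p : Fin (r + 1) → P) (q : Fin (s + 1) → P),
        StrictMono p → StrictMono q → p (Fin.last r) ≤ q 0 →
          ∀ i j, p i ≤ q j := by
  constructor
  · intro r c hc
    have hm : Monotone c := hc.monotone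
    have h1 : Monotone (fun i => (c i).1.1) := fun i j hij => (Prod.le_def.mp (hm hij)).1
    have h2 : Antitone (fun i => OrderDual.ofDual (c i).1.2) := fun i j hij => (Prod.le_def.mp (hm hij)).2
    refine ⟨h1, h2, fun i j => ?_⟩
    rcases le_total i j with h | h
    · exact le_trans (h1 h) (c j).2
    · exact le_trans (c i).2 (h2 h)
  · intro r s p q hp hq hle i j
    calc p i ≤ p (Fin.last r) := hp.monotone (Fin.le_last i)
      _ ≤ q 0 := hle
      _ ≤ q j := hq.monotone (Fin.zero_le j)
end

section
/- Let n ≥ 0 and let P = P({1,…,n+2}) ∖ {∅, {1,…,n+2}} be the poset of proper nonempty subsets of {1,…,n+2} ordered by inclusion. Let the face poset of Hom_{{2,4}}(C₅, K_{n+2}) be the poset of functions φ : {1,3,5} → P({1,…,n+2})∖{∅} satisfying φ(1) ∩ φ(5) = ∅, (φ(1) ∪ φ(3))ᶜ ≠ ∅ and (φ(5) ∪ φ(3))ᶜ ≠ ∅, ordered pointwise by inclusion. Then this face poset is isomorphic to {(pᵒᵖ, q, rᵒᵖ) ∈ Pᵒᵖ × P × Pᵒᵖ : q ⊆ r, p ⊄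 q, p ∩ r ≠ ∅}, where p ⊄ q means ¬(p ⊆ q) and the Pᵒᵖ coordinates reverse inclusion, via the order isomorphism φ ↦ ((φ(3))ᶜ, φ(1), (φ(5))ᶜ). -/
open OrderDual

variable (n : ℕ)

/-- The face poset of `Hom_{{2,4}}(C₅, K_{n+2})`: triples `(φ(1), φ(3), φ(5))` of nonempty
sets of colours, ordered by pointwise inclusion, with `φ(1) ∩ φ(5) = ∅` (the edge `{1,5}` of
`C₅ ∖ {2,4}`), `(φ(1) ∪ φ(3))ᶜ ≠ ∅` (extendability to the vertex `2`) and
`(φ(5) ∪ φ(3))ᶜ ≠ ∅` (extendability to the vertex `4`). -/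
abbrev HomFacePoset :=
  {t : Set (Fin (n + 2)) × Set (Fin (n + 2)) × Set (Fin (n + 2)) //
    t.1 ≠ ∅ ∧ t.2.1 ≠ ∅ ∧ t.2.2 ≠ ∅ ∧
    t.1 ∩ t.2.2 = ∅ ∧ (t.1 ∪ t.2.1)ᶜ ≠ ∅ ∧ (t.2.2 ∪ t.2.1)ᶜ ≠ ∅}

/-- The poset `{(pᵒᵖ, q, rᵒᵖ) ∈ Pᵒᵖ × P × Pᵒᵖ : q ⊆ r, ¬ p ⊆ q, p ∩ r ≠ ∅}`, where
`P` is the poset of proper nonempty subsets of the colour set, ordered by inclusion. -/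
abbrev TriplePoset :=
  {w : (Set (Fin (n + 2)))ᵒᵈ × Set (Fin (n + 2)) × (Set (Fin (n + 2)))ᵒᵈ //
    ofDual w.1 ≠ ∅ ∧ ofDual w.1 ≠ Set.univ ∧
    w.2.1 ≠ ∅ ∧ w.2.1 ≠ Set.univ ∧
    ofDual w.2.2 ≠ ∅ ∧ ofDual w.2.2 ≠ Set.univ ∧
    w.2.1 ⊆ ofDual w.2.2 ∧ ¬ ofDual w.1 ⊆ w.2.1 ∧ ofDual w.1 ∩ ofDual w.2.2 ≠ ∅}


open Set in
lemma cond_iff' {X : Type*} (A B C : Set X) :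
    (A ≠ ∅ ∧ B ≠ ∅ ∧ C ≠ ∅ ∧ A ∩ C = ∅ ∧ (A ∪ B)ᶜ ≠ ∅ ∧ (C ∪ B)ᶜ ≠ ∅) ↔
    (Bᶜ ≠ ∅ ∧ Bᶜ ≠ univ ∧ A ≠ ∅ ∧ A ≠ univ ∧ Cᶜ ≠ ∅ ∧ Cᶜ ≠ univ ∧
      A ⊆ Cᶜ ∧ ¬ Bᶜ ⊆ A ∧ Bᶜ ∩ Cᶜ ≠ ∅) := by
  simp only [ne_eq, compl_empty_iff, compl_univ_iff, ← compl_union,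
    compl_subset_comm (s := B), ← disjoint_iff_inter_eq_empty,
    subset_compl_iff_disjoint_right]
  constructor
  · rintro ⟨hA, hB, hC, hAC, hAB, hCB⟩
    exact ⟨fun h => hAB (by simp [h]), hB, hA, fun h => hAB (by simp [h]),
      fun h => hCB (by simp [h]), hC, hAC,
      fun h => hAB (compl_subset_iff_union.mp h),
      fun h => hCB (by rwa [union_comm])⟩
  · rintro ⟨hBu, hB, hA, hAu, hCu, hC, hAC, hAB, hBC⟩
    exact ⟨hA, hB, hC, hAC, fun h => hAB (compl_subset_iff_union.mpr h),
      fun h => hBC (by rwa [union_comm])⟩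

/-- `φ ↦ ((φ 3)ᶜ, φ 1, (φ 5)ᶜ)` is an order isomorphism from the face poset
of `Hom_{{2,4}}(C₅, K_{n+2})` onto
`{(pᵒᵖ, q, rᵒᵖ) ∈ Pᵒᵖ × P × Pᵒᵖ : q ⊆ r, ¬ p ⊆ q, p ∩ r ≠ ∅}`. -/
theorem stmt17 :
    ∃ e : HomFacePoset n ≃o TriplePoset n,
      ∀ t : HomFacePoset n,
        (e t).1 = (toDual (t.1.2.1)ᶜ, t.1.1, toDual (t.1.2.2)ᶜ) := by
  refine ⟨⟨⟨fun t => ⟨(toDual (t.1.2.1)ᶜ, t.1.1, toDual (t.1.2.2)ᶜ),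
      (cond_iff' _ _ _).mp t.2⟩,
    fun w => ⟨(w.1.2.1, (ofDual w.1.1)ᶜ, (ofDual w.1.2.2)ᶜ),
      (cond_iff' _ _ _).mpr (by simpa using w.2)⟩,
    fun t => by ext <;> simp, fun w => by ext <;> simp⟩, ?_⟩, fun t => rfl⟩
  intro a b
  simp only [← Subtype.coe_le_coe, Prod.le_def, Equiv.coe_fn_mk, Subtype.mk_le_mk,
    toDual_le_toDual, Set.compl_subset_compl, Set.le_eq_subset]
  tauto
end
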